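/- Trace formula for the cycle graph: for the cycle graph on L ≥ 3 vertices, Σ_{j=1}^{L} exp(2t cos(2πj/L)) = L · Σ_{r=−∞}^{∞} I_{rL}(2t) for all real t, where I_n is the modified Bessel function of the first kind. -/

import Mathlib

/-!
Expanding `exp (t (z + z⁻¹)) = exp (t z) * exp (t z⁻¹)` as a double series and grouping the
terms by the exponent `a - b = n` of `z` gives the generating function
`exp (t (z + z⁻¹)) = ∑_{n ∈ ℤ} I_{|n|}(2t) zⁿ`. Put `z = ζʲ` for a primitive `L`-th root of unity
`ζ`, so that `t (z + z⁻¹) = 2t cos(2πj/L)`, and sum over `j`: the character sum `∑ⱼ ζ^{jn}` is `L`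
when `L ∣ n` and `0` otherwise, which leaves `L ∑_{r ∈ ℤ} I_{|r|L}(2t)`.
-/

/-- The modified Bessel function of the first kind of integer order l,
I_l(x) = Σ_{m≥0} (x/2)^{l+2m} / (m!(l+m)!). -/
noncomputable def besselI (l : ℕ) (x : ℝ) : ℝ :=
  ∑' m : ℕ, (x / 2) ^ (l + 2 * m) / ((Nat.factorial m) * (Nat.factorial (l + m)))

open Complex Finset

lemma Complex.hasSum_exp_mul_exp (x y : ℂ) :
    HasSum (fun p : ℕ × ℕ => x ^ p.1 / p.1.factorial * (y ^ p.2 / p.2.factorial))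
      (exp x * exp y) := by
  have hx := NormedSpace.norm_expSeries_div_summable x
  have hy := NormedSpace.norm_expSeries_div_summable y
  rw [exp_eq_exp_ℂ, ← (NormedSpace.expSeries_div_hasSum_exp x).tsum_eq,
    ← (NormedSpace.expSeries_div_hasSum_exp y).tsum_eq, tsum_mul_tsum_of_summable_norm hx hy]
  exact (summable_mul_of_summable_norm hx hy).hasSum

def diffMinEquiv : ℤ × ℕ ≃ ℕ × ℕ where
  toFun q := (q.2 + q.1.toNat, q.2 + (-q.1).toNat)
  invFun p := ((p.1 : ℤ) - p.2, min p.1 p.2)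
  left_inv := by rintro ⟨n, m⟩; simp only [Prod.mk.injEq]; omega
  right_inv := by rintro ⟨a, b⟩; simp only [Prod.mk.injEq]; omega

lemma pow_div_factorial_mul_diffMinEquiv (t : ℝ) {z : ℂ} (hz : z ≠ 0) (n : ℤ) (m : ℕ) :
    let p := diffMinEquiv (n, m)
    (t * z) ^ p.1 / p.1.factorial * ((t * z⁻¹) ^ p.2 / p.2.factorial) =
      ((t ^ (n.natAbs + 2 * m) / (m.factorial * (n.natAbs + m).factorial) : ℝ) : ℂ) * z ^ n := by
  rcases n with k | k
  · simp [diffMinEquiv]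
    rw [Nat.add_comm k m, mul_pow, mul_pow, inv_pow]
    field_simp
    ring
  · simp [diffMinEquiv, zpow_negSucc]
    rw [Nat.add_comm (k + 1) m, mul_pow, mul_pow, inv_pow]
    field_simp
    ring

lemma hasSum_besselI (n : ℕ) (x : ℝ) :
    HasSum (fun m : ℕ => (x / 2) ^ (n + 2 * m) / (m.factorial * (n + m).factorial))
      (besselI n x) := by
  refine (Summable.of_norm_bounded
    ((Real.summable_pow_div_factorial (|x / 2| ^ 2)).mul_left (|x / 2| ^ n)) fun m => ?_).hasSum
  rw [Real.norm_eq_abs, abs_div, abs_pow,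
    abs_of_pos (by positivity : (0 : ℝ) < m.factorial * (n + m).factorial), pow_add, pow_mul,
    mul_div_assoc]
  gcongr
  exact le_mul_of_one_le_right (by positivity) (mod_cast (n + m).factorial_pos)

theorem hasSum_besselI_mul_zpow (t : ℝ) {z : ℂ} (hz : z ≠ 0) :
    HasSum (fun n : ℤ => (besselI n.natAbs (2 * t) : ℂ) * z ^ n) (exp (t * (z + z⁻¹))) := by
  have h := Complex.hasSum_exp_mul_exp (t * z) (t * z⁻¹)
  rw [← exp_add, ← mul_add, ← diffMinEquiv.hasSum_iff] at h
  refine h.prod_fiberwise fun n => ?_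
  simp only [Function.comp_apply, pow_div_factorial_mul_diffMinEquiv t hz]
  have hI := hasSum_besselI n.natAbs (2 * t)
  rw [mul_div_cancel_left₀ t two_ne_zero] at hI
  exact (Complex.hasSum_ofReal.mpr hI).mul_right _

lemma sum_Icc_pow_of_pow_eq_one {R : Type*} [CommRing R] [IsDomain R] [DecidableEq R] {w : R}
    {L : ℕ} (hw : w ^ L = 1) : ∑ j ∈ Icc 1 L, w ^ j = if w = 1 then (L : R) else 0 := by
  split_ifs with h
  · simp [h]
  · have hgeom : (∑ j ∈ range L, w ^ j) * (w - 1) = 0 := by rw [geom_sum_mul, hw, sub_self]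
    rw [← Ico_add_one_right_eq_Icc, sum_Ico_eq_sum_range, Nat.add_sub_cancel]
    simp only [add_comm 1, pow_succ', ← mul_sum]
    rw [(mul_eq_zero.mp hgeom).resolve_right (sub_ne_zero.mpr h), mul_zero]

theorem IsPrimitiveRoot.sum_Icc_pow_zpow {K : Type*} [Field K] {ζ : K} {L : ℕ}
    (hζ : IsPrimitiveRoot ζ L) (n : ℤ) :
    ∑ j ∈ Icc 1 L, (ζ ^ j) ^ n = if (L : ℤ) ∣ n then (L : K) else 0 := by
  classical
  have hcomm (j : ℕ) : (ζ ^ j) ^ n = (ζ ^ n) ^ j := by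
    rw [← zpow_natCast, ← zpow_natCast, zpow_comm]
  have hw : (ζ ^ n) ^ L = 1 := by rw [← hcomm, hζ.pow_eq_one, one_zpow]
  rw [sum_congr rfl fun j _ => hcomm j, sum_Icc_pow_of_pow_eq_one hw]
  exact if_congr (hζ.zpow_eq_one_iff_dvd n) rfl rfl

lemma Complex.ofReal_exp_two_mul_mul_cos (t θ : ℝ) :
    (Real.exp (2 * t * Real.cos θ) : ℂ) = exp (t * (exp (θ * I) + (exp (θ * I))⁻¹)) := by
  push_cast
  rw [Complex.cos, ← exp_neg]
  ring_nf

lemma hasSum_ite_dvd_iff {α : Type*} [AddCommMonoid α] [TopologicalSpace α] {L : ℕ} (hL : L ≠ 0)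
    {f : ℤ → α} {a : α} :
    HasSum (fun n : ℤ => if (L : ℤ) ∣ n then f n else 0) a ↔ HasSum (fun r : ℤ => f (r * L)) a := by
  have hinj : Function.Injective (fun r : ℤ => r * L) := mul_left_injective₀ (by exact_mod_cast hL)
  rw [← hinj.hasSum_iff]
  · simp [Function.comp_def]
  · intro n hn
    rw [if_neg]
    rintro ⟨r, rfl⟩
    exact hn ⟨r, mul_comm _ _⟩

lemma eq_zero_add_two_mul_tsum_of_hasSum_natAbs {f : ℕ → ℝ} {a : ℝ}
    (h : HasSum (fun n : ℤ => f n.natAbs) a) : a = f 0 + 2 * ∑' n, f (n + 1) := by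
  have h2 : HasSum (fun n : ℕ => 2 * f n) (a + f 0) := by
    simpa [two_mul] using h.nat_add_neg
  have := ((hasSum_nat_add_iff' 1).mpr h2).tsum_eq
  rw [tsum_mul_left] at this
  simp only [range_one, sum_singleton] at this
  linarith

theorem cycle_trace_formula_general (L : ℕ) (t : ℝ) :
    ∑ j ∈ Finset.Icc 1 L, Real.exp (2 * t * Real.cos (2 * Real.pi * j / L)) =
      (L : ℝ) * (besselI 0 (2 * t) + 2 * ∑' r : ℕ, besselI ((r + 1) * L) (2 * t)) := by
  rcases L.eq_zero_or_pos with rfl | hL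
  · simp
  set ζ := exp (2 * Real.pi * I / L)
  have hζ : IsPrimitiveRoot ζ L := Complex.isPrimitiveRoot_exp L hL.ne'
  have hexp (j : ℕ) : (Real.exp (2 * t * Real.cos (2 * Real.pi * j / L)) : ℂ) =
      exp (t * (ζ ^ j + (ζ ^ j)⁻¹)) := by
    rw [ofReal_exp_two_mul_mul_cos, ← exp_nat_mul]
    push_cast
    ring_nf
  have hsum : HasSum (fun n : ℤ => if (L : ℤ) ∣ n then (L : ℝ) * besselI n.natAbs (2 * t) else 0)
      (∑ j ∈ Icc 1 L, Real.exp (2 * t * Real.cos (2 * Real.pi * j / L))) := by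
    have h := hasSum_sum fun j (_ : j ∈ Icc 1 L) =>
      hasSum_besselI_mul_zpow t (pow_ne_zero j (hζ.ne_zero hL.ne'))
    simp_rw [← mul_sum, hζ.sum_Icc_pow_zpow, ← hexp] at h
    rw [← Complex.hasSum_ofReal, ofReal_sum]
    convert h using 2 with n
    split_ifs <;> push_cast <;> ring
  rw [hasSum_ite_dvd_iff hL.ne'] at hsum
  simp only [Int.natAbs_mul, Int.natAbs_natCast] at hsum
  rw [eq_zero_add_two_mul_tsum_of_hasSum_natAbs (f := fun k => (L : ℝ) * besselI (k * L) (2 * t))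
    hsum, tsum_mul_left, zero_mul]
  ring

/-- Trace formula for the cycle graph on L ≥ 3 vertices: for all real t,
Σ_{j=1}^{L} exp(2t cos(2πj/L)) = L Σ_{r∈ℤ} I_{rL}(2t).  Since I_{−n} = I_n, the
two-sided sum is written as I_0(2t) + 2 Σ_{r≥1} I_{rL}(2t). -/
theorem cycle_trace_formula (L : ℕ) (hL : 3 ≤ L) (t : ℝ) :
    ∑ j ∈ Finset.Icc 1 L, Real.exp (2 * t * Real.cos (2 * Real.pi * j / L)) =
      (L : ℝ) * (besselI 0 (2 * t) + 2 * ∑' r : ℕ, besselI ((r + 1) * L) (2 * t)) :=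
  cycle_trace_formula_general L t
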